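/- On ℝ⁴ with coordinates (τ, x, y, z) and the metric g = C(τ)² (−dτ² + e^{−2τ/c} dx² + e^{−2ατ/c} dy² + dz²), where C is smooth and nonvanishing and c ≠ 0, the vector field X = c ∂_τ + x ∂_x + α y ∂_y satisfies 𝓛_X g = 2ψ g with ψ = c (ln|C|)'(τ). -/

import Mathlib

open scoped BigOperators
open Real

noncomputable section

variable {ι : Type*} [Fintype ι] [DecidableEq ι]

/-- Partial derivative of a function on coordinate space along the `i`-th coordinate. -/
def pd (f : (ι → ℝ) → ℝ) (i : ι) (x : ι → ℝ) : ℝ :=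
  fderiv ℝ f x (Pi.single i 1)

/-- Christoffel symbols `Γ^k_{ij}` of a metric `g` with inverse `ginv`, in coordinates. -/
def Christoffel (g ginv : (ι → ℝ) → Matrix ι ι ℝ) (k i j : ι) (x : ι → ℝ) : ℝ :=
  (1 / 2) * ∑ l, ginv x k l *
    (pd (fun y => g y l i) j x + pd (fun y => g y l j) i x - pd (fun y => g y i j) l x)

/-- Riemann curvature tensor `R^a_{bcd}` in coordinates. -/
def RiemannUp (g ginv : (ι → ℝ) → Matrix ι ι ℝ) (a b c d : ι) (x : ι → ℝ) : ℝ :=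
  pd (Christoffel g ginv a d b) c x - pd (Christoffel g ginv a c b) d x
    + ∑ e, Christoffel g ginv a c e x * Christoffel g ginv e d b x
    - ∑ e, Christoffel g ginv a d e x * Christoffel g ginv e c b x

/-- Fully covariant Riemann tensor `R_{abcd}`. -/
def RiemannLow (g ginv : (ι → ℝ) → Matrix ι ι ℝ) (a b c d : ι) (x : ι → ℝ) : ℝ :=
  ∑ e, g x a e * RiemannUp g ginv e b c d x

/-- Ricci tensor `R_{bd}`. -/
def RicciT (g ginv : (ι → ℝ) → Matrix ι ι ℝ) (b d : ι) (x : ι → ℝ) : ℝ :=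
  ∑ a, RiemannUp g ginv a b a d x

/-- Scalar curvature. -/
def ScalarCurv (g ginv : (ι → ℝ) → Matrix ι ι ℝ) (x : ι → ℝ) : ℝ :=
  ∑ b, ∑ d, ginv x b d * RicciT g ginv b d x

/-- Lie derivative of the metric `g` along the vector field `X`, in coordinates:
`(𝓛_X g)_{ab} = X^c ∂_c g_{ab} + g_{cb} ∂_a X^c + g_{ac} ∂_b X^c`. -/
def lieD (g : (ι → ℝ) → Matrix ι ι ℝ) (X : (ι → ℝ) → ι → ℝ) (x : ι → ℝ) :
    Matrix ι ι ℝ :=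
  Matrix.of fun a b =>
    (∑ c, X x c * pd (fun y => g y a b) c x)
      + (∑ c, g x c b * pd (fun y => X y c) a x)
      + (∑ c, g x a c * pd (fun y => X y c) b x)

/-- Covariant Hessian `f_{;ab} = ∂_a ∂_b f − Γ^c_{ab} ∂_c f`. -/
def covHess (g ginv : (ι → ℝ) → Matrix ι ι ℝ) (f : (ι → ℝ) → ℝ) (a b : ι)
    (x : ι → ℝ) : ℝ :=
  pd (pd f b) a x - ∑ c, Christoffel g ginv c a b x * pd f c x

end

lemma pd_comp0 {F : ℝ → ℝ} {d : ℝ} {x : Fin 4 → ℝ} (h : HasDerivAt F d (x 0)) (i : Fin 4) :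
    pd (fun y : Fin 4 → ℝ => F (y 0)) i x = d * Pi.single (M := fun _ : Fin 4 => ℝ) i 1 0 := by
  have hp := hasFDerivAt_apply (𝕜 := ℝ) (0 : Fin 4) x
  have h2 : HasFDerivAt (fun y : Fin 4 → ℝ => F (y 0)) (d • ContinuousLinearMap.proj (0 : Fin 4)) x :=
    h.comp_hasFDerivAt x hp
  unfold pd
  rw [h2.fderiv]
  simp

lemma pd_coord (j i : Fin 4) (x : Fin 4 → ℝ) :
    pd (fun y : Fin 4 → ℝ => y j) i x = Pi.single (M := fun _ : Fin 4 => ℝ) i 1 j := by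
  have hp := hasFDerivAt_apply (𝕜 := ℝ) (j : Fin 4) x
  unfold pd
  rw [hp.fderiv]; simp

lemma pd_const (k : ℝ) (i : Fin 4) (x : Fin 4 → ℝ) :
    pd (fun _ : Fin 4 → ℝ => k) i x = 0 := by
  unfold pd; rw [fderiv_fun_const]; simp

lemma pd_mul_coord (a : ℝ) (j i : Fin 4) (x : Fin 4 → ℝ) :
    pd (fun y : Fin 4 → ℝ => a * y j) i x = a * Pi.single (M := fun _ : Fin 4 => ℝ) i 1 j := by
  have hp := (hasFDerivAt_apply (𝕜 := ℝ) (j : Fin 4) x).const_mul a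
  unfold pd
  rw [hp.fderiv]; simp


/-- On ℝ⁴ with coordinates `(τ,x,y,z)` and metric
`g = C(τ)²(−dτ² + e^{−2τ/c} dx² + e^{−2ατ/c} dy² + dz²)` with `C` smooth and
nonvanishing and `c ≠ 0`, the vector field `X = c∂_τ + x∂_x + αy∂_y` satisfies
`𝓛_X g = 2ψ g` with `ψ = c (ln|C|)'(τ)`. -/
theorem bianchiI_B1_ckv (α c : ℝ) (hc : c ≠ 0) (C : ℝ → ℝ)
    (hC : ContDiff ℝ (⊤ : ℕ∞) C) (hC0 : ∀ τ, C τ ≠ 0)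
    (g : (Fin 4 → ℝ) → Matrix (Fin 4) (Fin 4) ℝ)
    (hg : g = fun x => (C (x 0)) ^ 2 • Matrix.diagonal
      ![-1, Real.exp (-2 * x 0 / c), Real.exp (-2 * α * x 0 / c), 1])
    (X : (Fin 4 → ℝ) → Fin 4 → ℝ)
    (hX : X = fun x => ![c, x 1, α * x 2, 0])
    (ψ : (Fin 4 → ℝ) → ℝ)
    (hψ : ψ = fun x => c * deriv (fun τ => Real.log |C τ|) (x 0)) :
    ∀ x : Fin 4 → ℝ, lieD g X x = (2 * ψ x) • g x := by
  subst hg hX hψ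
  intro x
  have hd : ∀ t, HasDerivAt C (deriv C t) t := fun t =>
    ((hC.differentiable (by simp)) t).hasDerivAt
  have hlog : deriv (fun τ => Real.log (C τ)) (x 0) = deriv C (x 0) / C (x 0) :=
    ((hd (x 0)).log (hC0 (x 0))).deriv
  have h0 : HasDerivAt (fun t => -C t ^ 2) (-((2:ℕ) * C (x 0) ^ 1 * deriv C (x 0))) (x 0) :=
    ((hd (x 0)).pow 2).neg
  have h3 : HasDerivAt (fun t => C t ^ 2) ((2:ℕ) * C (x 0) ^ 1 * deriv C (x 0)) (x 0) :=
    (hd (x 0)).pow 2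
  have he1 : HasDerivAt (fun t => Real.exp (-(2 * t) / c))
      (Real.exp (-(2 * x 0) / c) * (-(2 : ℝ) / c)) (x 0) := by
    have : HasDerivAt (fun t : ℝ => -(2 * t) / c) (-(2:ℝ) / c) (x 0) := by
      simpa using (((hasDerivAt_id (x 0)).const_mul 2).neg.div_const c)
    exact this.exp
  have he2 : HasDerivAt (fun t => Real.exp (-(2 * α * t) / c))
      (Real.exp (-(2 * α * x 0) / c) * (-(2 * α) / c)) (x 0) := by
    have : HasDerivAt (fun t : ℝ => -(2 * α * t) / c) (-(2 * α) / c) (x 0) := by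
      simpa using (((hasDerivAt_id (x 0)).const_mul (2 * α)).neg.div_const c)
    exact this.exp
  have h1 : HasDerivAt (fun t => C t ^ 2 * Real.exp (-(2 * t) / c)) _ (x 0) := h3.mul he1
  have h2 : HasDerivAt (fun t => C t ^ 2 * Real.exp (-(2 * α * t) / c)) _ (x 0) := h3.mul he2
  ext a b
  fin_cases a <;> fin_cases b <;>
    simp [lieD, Fin.sum_univ_four, Matrix.diagonal_apply, pd_const, pd_coord, pd_mul_coord,
      Pi.single_apply, Matrix.smul_apply]
  · -- (0,0)
    simp only [pd_comp0 h0, Pi.single_apply, hlog]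
    simp
    field_simp [hC0 (x 0)]
  · -- (1,1)
    simp only [pd_comp0 h1, Pi.single_apply, hlog]
    simp
    field_simp [hC0 (x 0)]
    ring
  · -- (2,2)
    simp only [pd_comp0 h2, Pi.single_apply, hlog]
    simp
    field_simp [hC0 (x 0)]
    ring
  · -- (3,3)
    simp only [pd_comp0 h3, Pi.single_apply, hlog]
    simp
    field_simp [hC0 (x 0)]
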